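/- Let k ≥ 4 be an even integer and let C be the cycle graph on {1,…,k} with edges {r,r+1} (1 ≤ r ≤ k−1) and {1,k}. Then the prism C* over C is bipartite, with vertex bipartition {p_1,p_3,…,p_{k−1}, q_2,q_4,…,q_k} ∪ {p_2,p_4,…,p_k, q_1,q_3,…,q_{k−1}}, and P_C ≠ I_{C*}: under the identification x_{ij} ↔ {p_i,p_j}, x_{ji} ↔ {q_i,q_j} for each edge {i,j} of C with i<j, and x_{ii} ↔ {p_i,q_i}, the ideal P_C is strictly contained in (in particular, not equal to) the kernel of the K-algebra homomorphism sending x_{ij} ↦ t_{p_i}t_{p_j}, x_{ji} ↦ t_{q_i}t_{q_j}, x_{ii} ↦ t_{p_i}t_{q_i}. -/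

import Mathlib

open MvPolynomial

/-- The cycle graph on `{1,…,k}` (here `Fin k`, with `r : Fin k` standing for the vertex
`r+1`): edges `{r, r+1}` for `1 ≤ r ≤ k-1` and `{1, k}`. -/
def cycleGraph' (k : ℕ) : SimpleGraph (Fin k) where
  Adj i j := i ≠ j ∧ ((i.val + 1) % k = j.val ∨ (j.val + 1) % k = i.val)
  symm := by
    constructor
    rintro i j ⟨hne, h⟩
    exact ⟨hne.symm, h.symm⟩
  loopless := by
    constructor
    rintro i ⟨hne, -⟩
    exact hne rfl

instance (k : ℕ) : DecidableRel (cycleGraph' k).Adj := fun i j =>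
  inferInstanceAs (Decidable (i ≠ j ∧ ((i.val + 1) % k = j.val ∨ (j.val + 1) % k = i.val)))

/-- The set of variables of `S`: one variable `x_{ii}` for each vertex `i` of `G` and two
variables `x_{ij}`, `x_{ji}` for each edge `{i,j}` of `G`. -/
abbrev VarSet (k : ℕ) (G : SimpleGraph (Fin k)) : Type :=
  {p : Fin k × Fin k // p.1 = p.2 ∨ G.Adj p.1 p.2}

/-- The diagonal 2-minor `f_{ij} = x_{ii} x_{jj} - x_{ij} x_{ji}`. -/
noncomputable def fij (K : Type) [Field K] {k : ℕ} {G : SimpleGraph (Fin k)}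
    {i j : Fin k} (h : G.Adj i j) : MvPolynomial (VarSet k G) K :=
  X ⟨(i, i), Or.inl rfl⟩ * X ⟨(j, j), Or.inl rfl⟩ -
    X ⟨(i, j), Or.inr h⟩ * X ⟨(j, i), Or.inr h.symm⟩

/-- The ideal `P_G` generated by the diagonal 2-minors `f_{ij}` for edges `{i,j}`, `i < j`. -/
noncomputable def PG (K : Type) [Field K] (k : ℕ) (G : SimpleGraph (Fin k)) :
    Ideal (MvPolynomial (VarSet k G) K) :=
  Ideal.span {f | ∃ i j : Fin k, ∃ h : G.Adj i j, i < j ∧ f = fij K h}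

/-- The prism `G*` over `G`: vertices `p_i = Sum.inl i` and `q_i = Sum.inr i`, with edges
`{p_i, p_j}` and `{q_i, q_j}` for every edge `{i,j}` of `G`, together with the rungs
`{p_i, q_i}`. -/
def prism {V : Type} (G : SimpleGraph V) : SimpleGraph (V ⊕ V) where
  Adj x y :=
    match x, y with
    | Sum.inl i, Sum.inl j => G.Adj i j
    | Sum.inr i, Sum.inr j => G.Adj i j
    | Sum.inl i, Sum.inr j => i = j
    | Sum.inr i, Sum.inl j => i = j
  symm := by
    constructor
    rintro (i | i) (j | j) h
    · exact G.adj_symm h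
    · exact h.symm
    · exact h.symm
    · exact G.adj_symm h
  loopless := by
    constructor
    rintro (i | i) h
    · exact G.irrefl h
    · exact G.irrefl h

/-- The `K`-algebra homomorphism whose kernel is the toric ideal `I_{C*}` of the prism `C*`,
under the identification `x_{ij} ↔ {p_i,p_j}`, `x_{ji} ↔ {q_i,q_j}`, `x_{ii} ↔ {p_i,q_i}`:
it sends `x_{ij} ↦ t_{p_i}t_{p_j}`, `x_{ji} ↦ t_{q_i}t_{q_j}` (for edges `{i,j}` with `i < j`)
and `x_{ii} ↦ t_{p_i}t_{q_i}`. -/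
noncomputable def prismMap (K : Type) [Field K] (k : ℕ) (G : SimpleGraph (Fin k)) :
    MvPolynomial (VarSet k G) K →ₐ[K] MvPolynomial (Fin k ⊕ Fin k) K :=
  aeval fun v =>
    if v.1.1 = v.1.2 then X (Sum.inl v.1.1) * X (Sum.inr v.1.1)
    else if v.1.1 < v.1.2 then X (Sum.inl v.1.1) * X (Sum.inl v.1.2)
    else X (Sum.inr v.1.1) * X (Sum.inr v.1.2)

/-- The 2-coloring of the prism `C*` realizing the bipartition
`{p_1,p_3,…,p_{k−1}, q_2,q_4,…,q_k} ∪ {p_2,p_4,…,p_k, q_1,q_3,…,q_{k−1}}` (in the 1-based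
numbering of the paper; `p_i` is `Sum.inl i`, `q_i` is `Sum.inr i`). -/
def prismColor (k : ℕ) : Fin k ⊕ Fin k → ZMod 2 :=
  Sum.elim (fun i => (i.val : ZMod 2)) (fun i => (i.val : ZMod 2) + 1)


/-!
A 2-coloring `c` of a graph 2-colors its prism by `c` on the `p`-layer and `c + 1` on the
`q`-layer; for an even cycle, `c` is the parity of the index.

For `P_C < I_{C*}`, take the cycle binomial `x₁₂x₃₄⋯x_{k-1,k} - x₂₃x₄₅⋯x_{k-2,k-1}x_{1k}` in the
`p`-layer variables: both monomials map to `t_{p₁}⋯t_{p_k}`, since each vertex of the even cycle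
lies on exactly one edge of either perfect matching. Every `f_{ij}` vanishes wherever all `x_{ii}`
and all `x_{ji}` (`i < j`) do, in particular at the point that is `1` on the variables `x_{i,i+1}`
and `0` elsewhere; the binomial takes the value `1` there.
-/

open Finset

section Prism

variable {V : Type} {G : SimpleGraph V}

def prismColoring (C : G.Coloring (ZMod 2)) : (prism G).Coloring (ZMod 2) :=
  SimpleGraph.Coloring.mk (Sum.elim C (C · + 1)) fun {x y} h => by
    rcases x with i | i <;> rcases y with j | j
    · exact C.valid h
    · obtain rfl : i = j := h
      exact left_ne_add.2 one_ne_zero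
    · obtain rfl : i = j := h
      exact (left_ne_add.2 one_ne_zero).symm
    · exact fun hij => C.valid h (add_right_cancel hij)

end Prism

section Cycle

variable {k : ℕ}

lemma val_finRotate (i : Fin k) : (finRotate k i : ℕ) = (i + 1) % k := by
  have := i.neZero
  rcases Nat.lt_or_ge 1 k with hk | hk
  · simp [Fin.val_add, Nat.mod_eq_of_lt hk]
  · have : k = 1 := by have := i.pos; omega
    subst this
    simp

lemma cycleGraph'_adj_iff {i j : Fin k} :
    (cycleGraph' k).Adj i j ↔ i ≠ j ∧ (finRotate k i = j ∨ finRotate k j = i) := by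
  show _ ∧ _ ↔ _
  simp only [Fin.ext_iff, val_finRotate]

lemma cycleGraph'_adj_finRotate (hk : 2 ≤ k) (i : Fin k) :
    (cycleGraph' k).Adj i (finRotate k i) := by
  refine cycleGraph'_adj_iff.2 ⟨fun h => ?_, Or.inl rfl⟩
  have := congrArg Fin.val h
  rw [val_finRotate] at this
  rcases Nat.lt_or_ge (i + 1) k with hi | hi
  · rw [Nat.mod_eq_of_lt hi] at this; omega
  · rw [show (i : ℕ) + 1 = k by omega, Nat.mod_self] at this; omega

lemma natCast_finRotate (hk : Even k) (i : Fin k) :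
    ((finRotate k i : ℕ) : ZMod 2) = i + 1 := by
  rw [val_finRotate, ← ZMod.natCast_mod, Nat.mod_mod_of_dvd _ (even_iff_two_dvd.1 hk),
    ZMod.natCast_mod]
  push_cast
  rfl

def parityColoring (hk : Even k) : (cycleGraph' k).Coloring (ZMod 2) :=
  SimpleGraph.Coloring.mk (fun i => ((i : ℕ) : ZMod 2)) fun {i j} h => by
    obtain ⟨-, rfl | rfl⟩ := cycleGraph'_adj_iff.1 h
    · rw [natCast_finRotate hk]; exact left_ne_add.2 one_ne_zero
    · rw [natCast_finRotate hk]; exact (left_ne_add.2 one_ne_zero).symm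

lemma even_finRotate_iff (hk : Even k) (i : Fin k) :
    Even (finRotate k i : ℕ) ↔ ¬ Even (i : ℕ) := by
  rw [← ZMod.natCast_eq_zero_iff_even, ← ZMod.natCast_eq_zero_iff_even, natCast_finRotate hk]
  generalize ((i : ℕ) : ZMod 2) = a
  decide +revert

end Cycle

theorem Finset.prod_filter_mul_apply_perm {ι M : Type*} [Fintype ι] [CommMonoid M]
    (σ : Equiv.Perm ι) (p : ι → Prop) [DecidablePred p] (hσ : ∀ i, p (σ i) ↔ ¬ p i)
    (f : ι → M) : ∏ i with p i, f i * f (σ i) = ∏ i, f i := by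
  rw [prod_mul_distrib, ← prod_filter_mul_prod_filter_not univ p]
  congr 1
  exact prod_equiv σ (by simp [hσ]) (by simp)

section Binomial

variable (K : Type) [Field K] {k : ℕ} {G : SimpleGraph (Fin k)}

/-- The variable `x_{ij}` with `i < j`, which stands for the edge `{p_i, p_j}` of the prism. -/
noncomputable def pEdgeVar {i j : Fin k} (h : G.Adj i j) : MvPolynomial (VarSet k G) K :=
  X ⟨(min i j, max i j), Or.inr <| by
    rcases le_total i j with hij | hij <;> simp [hij, h, h.symm]⟩

variable {K}

lemma pEdgeVar_of_lt {i j : Fin k} (h : G.Adj i j) (hij : i < j) :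
    pEdgeVar K h = X ⟨(i, j), Or.inr h⟩ := by
  simp [pEdgeVar, hij.le]

lemma pEdgeVar_symm {i j : Fin k} (h : G.Adj i j) : pEdgeVar K h.symm = pEdgeVar K h := by
  simp [pEdgeVar, min_comm, max_comm]

lemma prismMap_pEdgeVar {i j : Fin k} (h : G.Adj i j) :
    prismMap K k G (pEdgeVar K h) = X (Sum.inl i) * X (Sum.inl j) := by
  rcases lt_or_gt_of_ne h.ne with hij | hji
  · simp [pEdgeVar_of_lt h hij, prismMap, hij.ne, hij]
  · rw [← pEdgeVar_symm, pEdgeVar_of_lt h.symm hji, mul_comm]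
    simp [prismMap, hji.ne, hji]

variable (K) in
lemma PG_le_ker_prismMap : PG K k G ≤ RingHom.ker (prismMap K k G).toRingHom := by
  refine Ideal.span_le.2 ?_
  rintro f ⟨i, j, h, hij, rfl⟩
  simp only [SetLike.mem_coe, RingHom.mem_ker, AlgHom.toRingHom_eq_coe, RingHom.coe_coe, fij,
    prismMap, map_sub, map_mul, aeval_X, ↓reduceIte, hij.ne, hij.ne', hij, hij.not_gt]
  ring

lemma PG_le_ker_eval {v : VarSet k G → K}
    (hv : ∀ x : VarSet k G, ¬ x.1.1 < x.1.2 → v x = 0) :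
    PG K k G ≤ RingHom.ker (eval v) := by
  refine Ideal.span_le.2 ?_
  rintro f ⟨i, j, h, hij, rfl⟩
  simp [fij, hv ⟨(i, i), Or.inl rfl⟩ (lt_irrefl i), hv ⟨(j, i), Or.inr h.symm⟩ hij.not_gt]

end Binomial

section CycleBinomial

variable (K : Type) [Field K] {k : ℕ}

noncomputable def cycleBinomial (hk : 2 ≤ k) : MvPolynomial (VarSet k (cycleGraph' k)) K :=
  ∏ i : Fin k with Even i.val, pEdgeVar K (cycleGraph'_adj_finRotate hk i) -
    ∏ i : Fin k with ¬ Even i.val, pEdgeVar K (cycleGraph'_adj_finRotate hk i)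

lemma prismMap_cycleBinomial (hk : 2 ≤ k) (hke : Even k) :
    prismMap K k (cycleGraph' k) (cycleBinomial K hk) = 0 := by
  simp only [cycleBinomial, map_sub, map_prod, prismMap_pEdgeVar]
  have odd_finRotate_iff (i : Fin k) : ¬ Even (finRotate k i : ℕ) ↔ ¬ ¬ Even (i : ℕ) :=
    (even_finRotate_iff hke i).not
  rw [prod_filter_mul_apply_perm _ _ (even_finRotate_iff hke),
    prod_filter_mul_apply_perm _ _ odd_finRotate_iff, sub_self]

variable {K}

def succIndicator {G : SimpleGraph (Fin k)} (x : VarSet k G) : K :=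
  if (x.1.1 : ℕ) + 1 = x.1.2 then 1 else 0

lemma succIndicator_eq_zero {G : SimpleGraph (Fin k)} (x : VarSet k G) (hx : ¬ x.1.1 < x.1.2) :
    succIndicator x = (0 : K) := by
  rw [Fin.lt_def] at hx
  simp only [succIndicator, ite_eq_right_iff]
  omega

lemma eval_succIndicator_pEdgeVar_finRotate (hk : 3 ≤ k) (i : Fin k) :
    eval succIndicator (pEdgeVar K (cycleGraph'_adj_finRotate (by omega) i)) =
      if (i : ℕ) + 1 < k then 1 else 0 := by
  by_cases hi : (i : ℕ) + 1 < k
  · have hrot : (finRotate k i : ℕ) = i + 1 := by rw [val_finRotate, Nat.mod_eq_of_lt hi]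
    rw [pEdgeVar_of_lt _ (Fin.lt_def.2 (by omega))]
    simp only [eval_X, succIndicator, hrot, hi, if_true]
  · have hrot : (finRotate k i : ℕ) = 0 := by
      rw [val_finRotate, show (i : ℕ) + 1 = k by omega, Nat.mod_self]
    rw [← pEdgeVar_symm, pEdgeVar_of_lt _ (Fin.lt_def.2 (by omega))]
    simp only [eval_X, succIndicator, hrot, hi, if_false]
    exact if_neg (by omega)

lemma eval_succIndicator_cycleBinomial (hk : 3 ≤ k) (hke : Even k) :
    eval succIndicator (cycleBinomial K (Nat.le_of_succ_le hk)) = 1 := by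
  have odd_pred : ¬ Even (k - 1) := by
    rintro ⟨r, hr⟩; obtain ⟨m, hm⟩ := hke; omega
  simp only [cycleBinomial, map_sub, map_prod, eval_succIndicator_pEdgeVar_finRotate hk]
  rw [prod_eq_one, prod_eq_zero (i := ⟨k - 1, by omega⟩), sub_zero]
  · simpa using odd_pred
  · simp [show k - 1 + 1 = k by omega]
  · intro i hi
    have : (i : ℕ) ≠ k - 1 := fun h => odd_pred (h ▸ (mem_filter.1 hi).2)
    simp [show (i : ℕ) + 1 < k by omega]

end CycleBinomial

/-- For an even cycle `C` of length `k ≥ 4`, the prism `C*` is bipartite,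
with the stated bipartition, and `P_C` is strictly contained in (in particular, not equal to)
the toric ideal `I_{C*}`. -/
theorem prism_of_even_cycle (K : Type) [Field K] (k : ℕ) (hk : 4 ≤ k) (hke : Even k) :
    (∀ x y, (prism (cycleGraph' k)).Adj x y → prismColor k x ≠ prismColor k y)
      ∧ PG K k (cycleGraph' k) < RingHom.ker (prismMap K k (cycleGraph' k)).toRingHom := by
  refine ⟨fun x y h => (prismColoring (parityColoring hke)).valid h,
    SetLike.lt_iff_le_and_exists.2 ⟨PG_le_ker_prismMap K, cycleBinomial K (by omega),
      prismMap_cycleBinomial K _ hke, fun hmem => ?_⟩⟩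
  have hzero := PG_le_ker_eval succIndicator_eq_zero hmem
  rw [RingHom.mem_ker, eval_succIndicator_cycleBinomial (by omega) hke] at hzero
  exact one_ne_zero hzero
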